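/- Let n ≥ 3, let q ∈ ℂ be a primitive p-th root of unity with p ≥ 2m+1. Then the polynomial P = x_1^p - x_2^p is q-deformed m-quasi-invariant but not symmetric. -/

import Mathlib

/-!
Since `2m + 1 ≤ p`, the powers `q^l` with `|l| ≤ m` are pairwise distinct `p`-th roots of unity,
so `∏_{|l| ≤ m} (x_i - q^l x_j)` divides `x_i^p - x_j^p = ∏_{ζ^p = 1} (x_i - ζ x_j)`. A transposition
permutes the `x_k^p`, so `P - s_{i,j} P` is an integer multiple of `x_i^p - x_j^p`. Finally
`s_{1,2}` sends `P` to `-P`, which differs from `P` at `x = (0, 1, 0, …, 0)`.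
-/

open MvPolynomial

/-- `P` is `q`-deformed `m`-quasi-invariant. -/
def QDeformedQuasiInvariant (n : ℕ) (q : ℂ) (m : ℕ)
    (P : MvPolynomial (Fin n) ℂ) : Prop :=
  ∀ i j : Fin n, i ≠ j →
    (∏ l ∈ Finset.Icc (-(m : ℤ)) (m : ℤ), (X i - C (q ^ l) * X j))
      ∣ P - rename (Equiv.swap i j) P

section RootsOfUnity

variable {K σ : Type*} [Field K] {p : ℕ} {q : K}

theorem IsPrimitiveRoot.injOn_zpow_Icc {m : ℕ} (hq : IsPrimitiveRoot q p) (hp : 2 * m + 1 ≤ p) :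
    Set.InjOn (q ^ · : ℤ → K) (Finset.Icc (-(m : ℤ)) m) := by
  intro a ha b hb hab
  simp only [Finset.coe_Icc, Set.mem_Icc] at ha hb
  have hq0 : q ≠ 0 := hq.ne_zero (by omega)
  have hdvd : (p : ℤ) ∣ a - b := by
    rw [← hq.zpow_eq_one_iff_dvd, zpow_sub₀ hq0, div_eq_one_iff_eq (zpow_ne_zero _ hq0)]
    exact hab
  have := Int.eq_zero_of_abs_lt_dvd hdvd (by rw [abs_lt]; omega)
  omega

theorem IsPrimitiveRoot.zpow_mem_nthRootsFinset (hp : 0 < p) (hq : IsPrimitiveRoot q p) (l : ℤ) :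
    q ^ l ∈ Polynomial.nthRootsFinset p (1 : K) := by
  rw [Polynomial.mem_nthRootsFinset hp, ← zpow_natCast, ← zpow_mul, mul_comm, zpow_mul,
    hq.zpow_eq_one, one_zpow]

theorem X_pow_sub_X_pow_eq_prod [Infinite K] (hp : 0 < p) (hq : IsPrimitiveRoot q p) (i j : σ) :
    (X i ^ p - X j ^ p : MvPolynomial σ K) =
      ∏ ζ ∈ Polynomial.nthRootsFinset p (1 : K), (X i - C ζ * X j) :=
  MvPolynomial.funext fun x => by
    simp only [map_sub, map_pow, map_prod, map_mul, eval_X, eval_C]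
    exact hq.pow_sub_pow_eq_prod_sub_mul _ _ hp

theorem prod_Icc_dvd_X_pow_sub_X_pow [Infinite K] {m : ℕ} (hp : 2 * m + 1 ≤ p)
    (hq : IsPrimitiveRoot q p) (i j : σ) :
    (∏ l ∈ Finset.Icc (-(m : ℤ)) m, (X i - C (q ^ l) * X j)) ∣
      (X i ^ p - X j ^ p : MvPolynomial σ K) := by
  classical
  rw [X_pow_sub_X_pow_eq_prod (by omega) hq,
    ← Finset.prod_image (f := fun ζ => X i - C ζ * X j) (hq.injOn_zpow_Icc hp)]
  refine Finset.prod_dvd_prod_of_subset _ _ _ fun ζ hζ => ?_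
  obtain ⟨l, -, rfl⟩ := Finset.mem_image.1 hζ
  exact hq.zpow_mem_nthRootsFinset (by omega) l

end RootsOfUnity

section Swap

variable {R σ : Type*} [CommRing R] [DecidableEq σ]

theorem X_pow_sub_X_pow_dvd_X_pow_sub_rename_swap (p : ℕ) (i j a : σ) :
    (X i ^ p - X j ^ p : MvPolynomial σ R) ∣ X a ^ p - rename (Equiv.swap i j) (X a ^ p) := by
  rw [map_pow, rename_X, Equiv.swap_apply_def]
  split_ifs with hi hj
  · subst hi; exact dvd_rfl
  · subst hj; exact (dvd_neg.2 dvd_rfl).trans (by rw [neg_sub])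
  · rw [sub_self]; exact dvd_zero _

theorem X_pow_sub_X_pow_dvd_sub_rename_swap (p : ℕ) (i j a b : σ) :
    (X i ^ p - X j ^ p : MvPolynomial σ R) ∣
      (X a ^ p - X b ^ p) - rename (Equiv.swap i j) (X a ^ p - X b ^ p) := by
  rw [map_sub, sub_sub_sub_comm]
  exact dvd_sub (X_pow_sub_X_pow_dvd_X_pow_sub_rename_swap p i j a)
    (X_pow_sub_X_pow_dvd_X_pow_sub_rename_swap p i j b)

theorem X_pow_sub_X_pow_not_isSymmetric [Nontrivial R] (hR : ringChar R ≠ 2) {p : ℕ}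
    (hp : p ≠ 0) {a b : σ} (hab : a ≠ b) :
    ¬ (X a ^ p - X b ^ p : MvPolynomial σ R).IsSymmetric := by
  intro hsym
  have h := congrArg (eval (Pi.single b 1)) (hsym (Equiv.swap a b))
  simp only [map_sub, map_pow, rename_X, Equiv.swap_apply_left, Equiv.swap_apply_right, eval_X,
    Pi.single_eq_same, Pi.single_eq_of_ne hab, one_pow, zero_pow hp, sub_zero, zero_sub] at h
  exact hR (neg_one_eq_one_iff.1 h.symm)

end Swap

theorem power_diff_qDeformed (n : ℕ) (hn : 3 ≤ n) (p m : ℕ) (hp : 2 * m + 1 ≤ p)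
    (q : ℂ) (hq : IsPrimitiveRoot q p) :
    QDeformedQuasiInvariant n q m
        (X (⟨0, by omega⟩ : Fin n) ^ p - X (⟨1, by omega⟩ : Fin n) ^ p) ∧
      ¬ (X (⟨0, by omega⟩ : Fin n) ^ p - X (⟨1, by omega⟩ : Fin n) ^ p :
          MvPolynomial (Fin n) ℂ).IsSymmetric := by
  refine ⟨fun i j _ => ?_, ?_⟩
  · exact (prod_Icc_dvd_X_pow_sub_X_pow hp hq i j).trans
      (X_pow_sub_X_pow_dvd_sub_rename_swap p i j _ _)
  · exact X_pow_sub_X_pow_not_isSymmetric (by simp [ringChar.eq_zero]) (by omega)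
      (by simp [Fin.ext_iff])
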